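/- arXiv:0801.4194 — 4 statements merged into one kernel-verified Lean document; each statement's English description precedes it below -/
import Mathlib

section
/- Let Q and D be real numbers with Q > 0 and D ≥ 1. Then the series W(Q,D) = ∑_{p ∈ dom U} |p|^Q · 2^{−|p|/D} diverges to ∞ (equivalently, the family of its nonnegative terms is not summable). -/
open Filter

/-- A set of finite binary strings is prefix-free if no element of it is a
prefix of another (distinct) element of it. -/
def PrefixFree (S : Set (List Bool)) : Prop :=
  ∀ p ∈ S, ∀ q ∈ S, p <+: q → p = q

/-- A computer: a partial recursive function from finite binary strings to
finite binary strings whose domain is a prefix-free set. -/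
structure Computer where
  f : List Bool →. List Bool
  partrec : Partrec f
  prefixFree : PrefixFree {p | (f p).Dom}

/-- The domain of a computer. -/
def Computer.domain (C : Computer) : Set (List Bool) := {p | (C.f p).Dom}

/-- A computer `U` is optimal if every computer can be simulated on `U` with
only a constant increase in program length. -/
def IsOptimal (U : Computer) : Prop :=
  ∀ C : Computer, ∃ d : ℕ, ∀ p : List Bool, (C.f p).Dom →
    ∃ p' : List Bool, p'.length ≤ p.length + d ∧ ∀ s, s ∈ C.f p → s ∈ U.f p'

/-- Program-size complexity `H(s)`: the minimal length of a program `p`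
with `U(p) = s`. -/
noncomputable def H (U : Computer) (s : List Bool) : ℕ :=
  sInf {n | ∃ p : List Bool, p.length = n ∧ s ∈ U.f p}

/-- The `n`-th bit (`n ≥ 1`) of the base-two expansion of `x mod 1`
(the expansion chosen with infinitely many zeros). -/
noncomputable def binDigit (x : ℝ) (n : ℕ) : Bool :=
  decide (⌊Int.fract x * 2 ^ n⌋ % 2 = 1)

/-- The first `n` bits of the base-two expansion of `x mod 1` (with
infinitely many zeros). -/
noncomputable def bits (x : ℝ) (n : ℕ) : List Bool :=
  (List.range n).map fun i => binDigit x (i + 1)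

/-- A real `x` is weakly Chaitin `D`-random (w.r.t. the computer `U`). -/
def WeaklyChaitinRandom (U : Computer) (D x : ℝ) : Prop :=
  ∃ c : ℝ, ∀ n : ℕ, 1 ≤ n → D * n - c ≤ (H U (bits x n) : ℝ)

/-- A real `x` is Chaitin `D`-random (w.r.t. the computer `U`). -/
def ChaitinRandom (U : Computer) (D x : ℝ) : Prop :=
  Tendsto (fun n : ℕ => (H U (bits x n) : ℝ) - D * n) atTop atTop

/-- A real `x` is `D`-compressible (w.r.t. the computer `U`). -/
def DCompressible (U : Computer) (D x : ℝ) : Prop :=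
  Filter.limsup (fun n : ℕ => (H U (bits x n) : ℝ) / n) atTop ≤ D

/-- A computable real number. -/
def ComputableReal (T : ℝ) : Prop :=
  ∃ f : ℕ → ℚ, Computable f ∧ ∀ n : ℕ, 1 ≤ n → |T - (f n : ℝ)| < 1 / n

/-- A right-computable real number. -/
def RightComputable (T : ℝ) : Prop :=
  ∃ g : ℕ → ℚ, Computable g ∧ (∀ n, T ≤ (g n : ℝ)) ∧
    Tendsto (fun n => ((g n : ℚ) : ℝ)) atTop (nhds T)

/-- A left-computable real number. -/
def LeftComputable (T : ℝ) : Prop := RightComputable (-T)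

/-- The term `2 ^ (-|p| / T)` of the partition function `Z(T)`. -/
noncomputable def zterm (U : Computer) (T : ℝ) (p : U.domain) : ℝ :=
  (2 : ℝ) ^ (-((p : List Bool).length : ℝ) / T)

/-- The term `|p| ^ Q * 2 ^ (-|p| / T)` of `W(Q,T)`. -/
noncomputable def wterm (U : Computer) (Q T : ℝ) (p : U.domain) : ℝ :=
  ((p : List Bool).length : ℝ) ^ Q * (2 : ℝ) ^ (-((p : List Bool).length : ℝ) / T)

/-- The term `|p| * 2 ^ (-|p| / T)` of `W(1,T)`. -/
noncomputable def wlterm (U : Computer) (T : ℝ) (p : U.domain) : ℝ :=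
  ((p : List Bool).length : ℝ) * (2 : ℝ) ^ (-((p : List Bool).length : ℝ) / T)

/-- The term `|p| ^ 2 * 2 ^ (-|p| / T)` of `W(2,T)`. -/
noncomputable def wsqterm (U : Computer) (T : ℝ) (p : U.domain) : ℝ :=
  ((p : List Bool).length : ℝ) ^ 2 * (2 : ℝ) ^ (-((p : List Bool).length : ℝ) / T)

/-- A lower-computable function `f : ℕ⁺ → [0,∞)` (represented on `ℕ`,
with all conditions imposed on positive arguments). -/
def LowerComputableFun (f : ℕ → ℝ) : Prop :=
  ∃ a : ℕ → ℕ → ℚ, Computable₂ a ∧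
    (∀ k n : ℕ, 1 ≤ k → 1 ≤ n → (a k n : ℝ) ≤ f n) ∧
    (∀ n : ℕ, 1 ≤ n → Tendsto (fun k => ((a k n : ℚ) : ℝ)) atTop (nhds (f n)))

/-- A lower-computable semi-measure on finite binary strings. -/
def LowerComputableSemiMeasure (r : List Bool → ℝ) : Prop :=
  (∀ s, 0 ≤ r s) ∧ (∀ s, r s ≤ 1) ∧ Summable r ∧ (∑' s, r s) ≤ 1 ∧
    ∃ f : ℕ → List Bool → ℚ, Computable₂ f ∧
      (∀ n s, ((f n s : ℚ) : ℝ) ≤ r s) ∧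
      (∀ s, Tendsto (fun n => ((f n s : ℚ) : ℝ)) atTop (nhds (r s)))

/-- A universal probability. -/
def UniversalProbability (m : List Bool → ℝ) : Prop :=
  LowerComputableSemiMeasure m ∧
    ∀ r : List Bool → ℝ, LowerComputableSemiMeasure r →
      ∃ c : ℝ, 0 < c ∧ ∀ s, c * r s ≤ m s

/-! The identity computer on the decidable prefix-free set of strings `0^k 1 s` with
`|s| = n + 1`, `n = 2^(k²)`, is simulated by `U` with some overhead `d`. This yields `2^(n+1)`
distinct programs of `U` of length at most `n + k + 2 + d`; fewer than `2^n` strings are shorter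
than `n`, so at least `2^n` of these programs contribute at least `n^Q 2^-(n+k+2+d)` each
(using `D ≥ 1`). Hence `W(Q,D) ≥ 2^(Q k² - k - d - 2)` for every `k`. -/

open Function Finset

/-- The strings `0^k 1 s` with `|s| = m k`. -/
def sparseCode (m : ℕ → ℕ) : Set (List Bool) :=
  {p | p.length = p.idxOf true + 1 + m (p.idxOf true)}

theorem idxOf_replicate_false_append (k : ℕ) (s : List Bool) :
    (List.replicate k false ++ true :: s).idxOf true = k := by
  induction k with
  | zero => simp
  | succ k ih => rw [List.replicate_succ, List.cons_append, List.idxOf_cons_ne _ (by decide), ih]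

theorem replicate_false_append_mem_sparseCode {m : ℕ → ℕ} {k : ℕ} {s : List Bool}
    (hs : s.length = m k) : List.replicate k false ++ true :: s ∈ sparseCode m := by
  simp only [sparseCode, Set.mem_ofPred_eq, idxOf_replicate_false_append, List.length_append,
    List.length_replicate, List.length_cons, hs]
  omega

theorem prefixFree_sparseCode (m : ℕ → ℕ) : PrefixFree (sparseCode m) := by
  rintro p hp q hq ⟨r, rfl⟩
  have htrue : true ∈ p := List.idxOf_lt_length_iff.mp (by rw [hp]; omega)
  simp only [sparseCode, Set.mem_ofPred_eq, List.idxOf_append_of_mem htrue,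
    List.length_append] at hp hq
  have : r = [] := List.eq_nil_of_length_eq_zero (by omega)
  simp [this]

theorem primrecPred_sparseCode {m : ℕ → ℕ} (hm : Primrec m) : PrimrecPred (· ∈ sparseCode m) := by
  have hidx : Primrec fun p : List Bool => p.idxOf true :=
    Primrec.list_idxOf.comp (Primrec.const true) Primrec.id
  exact Primrec.eq.comp Primrec.list_length
    (Primrec.nat_add.comp (Primrec.succ.comp hidx) (hm.comp hidx))

theorem card_filter_length_lt_lt {ι : Type*} [Fintype ι] {g : ι → List Bool}
    (hg : Injective g) (ℓ : ℕ) : #{i | (g i).length < ℓ} < 2 ^ ℓ := by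
  let short : Finset (List Bool) :=
    (range ℓ).biUnion fun n => univ.image (List.ofFn : (Fin n → Bool) → List Bool)
  have hmaps : ∀ i ∈ ({i | (g i).length < ℓ} : Finset ι), g i ∈ short := by
    intro i hi
    simp only [mem_filter, mem_univ, true_and] at hi
    exact mem_biUnion.mpr
      ⟨_, mem_range.mpr hi, mem_image.mpr ⟨(g i).get, mem_univ _, List.ofFn_get _⟩⟩
  calc #{i | (g i).length < ℓ} ≤ #short := card_le_card_of_injOn g hmaps hg.injOn
    _ ≤ ∑ n ∈ range ℓ, #(univ.image (List.ofFn : (Fin n → Bool) → List Bool)) := card_biUnion_le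
    _ ≤ ∑ n ∈ range ℓ, 2 ^ n := sum_le_sum fun n _ => card_image_le.trans (by simp)
    _ < 2 ^ ℓ := Nat.geomSum_lt le_rfl fun n hn => mem_range.mp hn

def Computer.restrictId (S : Set (List Bool)) [DecidablePred (· ∈ S)] (hS : PrimrecPred (· ∈ S))
    (hpf : PrefixFree S) : Computer where
  f p := ((if p ∈ S then some p else none : Option (List Bool)) : Part (List Bool))
  partrec := Computable.ofOption (Primrec.ite hS Primrec.option_some (Primrec.const none)).to_comp
  prefixFree := by
    convert hpf
    ext p
    by_cases hp : p ∈ S <;> simp [hp]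

theorem IsOptimal.exists_program {U : Computer} (hU : IsOptimal U) {S : Set (List Bool)}
    (hS : PrimrecPred (· ∈ S)) (hpf : PrefixFree S) :
    ∃ d : ℕ, ∀ p ∈ S, ∃ p' : U.domain, (p' : List Bool).length ≤ p.length + d ∧ p ∈ U.f p' := by
  classical
  obtain ⟨d, hd⟩ := hU (Computer.restrictId S hS hpf)
  refine ⟨d, fun p hp => ?_⟩
  have hmem : p ∈ (Computer.restrictId S hS hpf).f p := by simp [Computer.restrictId, hp]
  obtain ⟨p', hlen, hsim⟩ := hd p (Part.dom_iff_mem.mpr ⟨p, hmem⟩)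
  exact ⟨⟨p', Part.dom_iff_mem.mpr ⟨p, hsim p hmem⟩⟩, hlen, hsim p hmem⟩

theorem rpow_le_two_pow_mul_rpow_mul_two_rpow {ℓ L Q D : ℝ} {M : ℕ} (hℓ : 0 ≤ ℓ) (hℓL : ℓ ≤ L)
    (hLM : L ≤ M) (hQ : 0 ≤ Q) (hD : 1 ≤ D) : ℓ ^ Q ≤ 2 ^ M * (L ^ Q * 2 ^ (-L / D)) := by
  have hL : 0 ≤ L := hℓ.trans hℓL
  have hexp : (1 : ℝ) ≤ 2 ^ M * 2 ^ (-L / D) := by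
    rw [← Real.rpow_natCast, ← Real.rpow_add two_pos]
    refine Real.one_le_rpow one_le_two ?_
    have : L / D ≤ L := div_le_self hL hD
    rw [neg_div]
    linarith
  calc ℓ ^ Q ≤ L ^ Q := Real.rpow_le_rpow hℓ hℓL hQ
    _ ≤ L ^ Q * (2 ^ M * 2 ^ (-L / D)) := le_mul_of_one_le_right (by positivity) hexp
    _ = 2 ^ M * (L ^ Q * 2 ^ (-L / D)) := by ring

theorem wterm_nonneg (U : Computer) (Q D : ℝ) (p : U.domain) : 0 ≤ wterm U Q D p := by
  unfold wterm
  positivity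

theorem two_pow_mul_rpow_le_tsum_wterm {U : Computer} {Q D : ℝ} (hQ : 0 ≤ Q) (hD : 1 ≤ D)
    (hsum : Summable (wterm U Q D)) {n M : ℕ} {F : (Fin (n + 1) → Bool) → U.domain}
    (hF : Injective F) (hFM : ∀ v, (F v : List Bool).length ≤ M) :
    (2 : ℝ) ^ n * (n : ℝ) ^ Q ≤ 2 ^ M * ∑' p, wterm U Q D p := by
  set long : Finset (Fin (n + 1) → Bool) := {v | n ≤ (F v : List Bool).length}
  have hcard : 2 ^ n ≤ #long := by
    have hshort : #{v | (F v : List Bool).length < n} < 2 ^ n :=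
      card_filter_length_lt_lt (Subtype.val_injective.comp hF) n
    have hsplit : #long + #{v | (F v : List Bool).length < n} = 2 ^ (n + 1) := by
      simpa only [card_univ, Fintype.card_fun, Fintype.card_bool, Fintype.card_fin, not_le] using
        card_filter_add_card_filter_not (s := univ) fun v => n ≤ (F v : List Bool).length
    rw [pow_succ] at hsplit
    omega
  have hterm : ∀ v ∈ long, (n : ℝ) ^ Q ≤ 2 ^ M * wterm U Q D (F v) := fun v hv =>
    rpow_le_two_pow_mul_rpow_mul_two_rpow (Nat.cast_nonneg _)
      (Nat.cast_le.mpr (mem_filter.mp hv).2) (Nat.cast_le.mpr (hFM v)) hQ hD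
  calc (2 : ℝ) ^ n * (n : ℝ) ^ Q ≤ #long * (n : ℝ) ^ Q := by
        gcongr; exact_mod_cast hcard
    _ ≤ ∑ v ∈ long, 2 ^ M * wterm U Q D (F v) := by
        rw [← nsmul_eq_mul]; exact card_nsmul_le_sum _ _ _ hterm
    _ ≤ 2 ^ M * ∑ v, wterm U Q D (F v) := by
        rw [← mul_sum]
        gcongr 2 ^ M * ?_
        exact sum_le_sum_of_subset_of_nonneg (subset_univ _) fun v _ _ => wterm_nonneg U Q D _
    _ = 2 ^ M * ∑' v, wterm U Q D (F v) := by rw [tsum_fintype]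
    _ ≤ 2 ^ M * ∑' p, wterm U Q D p := by
        gcongr 2 ^ M * ?_
        exact tsum_comp_le_tsum_of_inj hsum (wterm_nonneg U Q D) hF

theorem two_pow_mul_rpow_le_tsum_wterm_of_sparseCode {U : Computer} {Q D : ℝ} (hQ : 0 ≤ Q)
    (hD : 1 ≤ D) (hsum : Summable (wterm U Q D)) {m : ℕ → ℕ} {d : ℕ}
    (hd : ∀ p ∈ sparseCode m, ∃ p' : U.domain, (p' : List Bool).length ≤ p.length + d ∧ p ∈ U.f p')
    {k n : ℕ} (hk : m k = n + 1) :
    (2 : ℝ) ^ n * (n : ℝ) ^ Q ≤ 2 ^ (k + n + 2 + d) * ∑' p, wterm U Q D p := by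
  choose F hFlen hFmem using fun v : Fin (n + 1) → Bool =>
    hd _ (replicate_false_append_mem_sparseCode (List.length_ofFn.trans hk.symm))
  have hF : Injective F := fun v w h => List.ofFn_injective <| List.cons_injective <|
    List.append_cancel_left (Part.mem_unique (hFmem v) (h ▸ hFmem w))
  refine two_pow_mul_rpow_le_tsum_wterm hQ hD hsum hF fun v => (hFlen v).trans_eq ?_
  simp only [List.length_append, List.length_replicate, List.length_cons, List.length_ofFn]
  ring

theorem tendsto_rpow_two_pow_mul_self_div_two_pow {Q : ℝ} (hQ : 0 < Q) :
    Tendsto (fun k : ℕ => ((2 : ℝ) ^ (k * k)) ^ Q / 2 ^ k) atTop atTop := by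
  have hexp : Tendsto (fun k : ℕ => ((k : ℝ) * Q - 1) * k) atTop atTop :=
    ((tendsto_natCast_atTop_atTop.atTop_mul_const hQ).atTop_add tendsto_const_nhds).atTop_mul_atTop₀
      tendsto_natCast_atTop_atTop
  refine ((tendsto_rpow_atTop_of_base_gt_one 2 one_lt_two).comp hexp).congr fun k => ?_
  simp only [comp_apply]
  rw [← Real.rpow_natCast, ← Real.rpow_natCast 2 k, ← Real.rpow_mul zero_le_two,
    ← Real.rpow_sub two_pos]
  push_cast
  ring_nf

/-- **Theorem (paper Thm 3(ii)).** For real `Q > 0` and `D ≥ 1`,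
`W(Q,D) = ∑_{p ∈ dom U} |p|^Q·2^{-|p|/D}` diverges to infinity. -/
theorem W_not_summable (U : Computer) (hU : IsOptimal U)
    (Q D : ℝ) (hQpos : 0 < Q) (hD : 1 ≤ D) :
    ¬ Summable (wterm U Q D) := by
  intro hsum
  set T := ∑' p, wterm U Q D p
  let m : ℕ → ℕ := fun k => 2 ^ (k * k) + 1
  have hm : Primrec m := Primrec.succ.comp <|
    (Primrec₂.unpaired'.1 Nat.Primrec.pow : Primrec₂ ((· ^ ·) : ℕ → ℕ → ℕ)).comp
      (Primrec.const 2) (Primrec.nat_mul.comp Primrec.id Primrec.id)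
  obtain ⟨d, hd⟩ := hU.exists_program (primrecPred_sparseCode hm) (prefixFree_sparseCode m)
  have hblock (k : ℕ) : ((2 : ℝ) ^ (k * k)) ^ Q / 2 ^ k ≤ 2 ^ (d + 2) * T := by
    have := two_pow_mul_rpow_le_tsum_wterm_of_sparseCode hQpos.le hD hsum hd (k := k) rfl
    rw [div_le_iff₀ (by positivity)]
    refine le_of_mul_le_mul_left ?_ (by positivity : (0 : ℝ) < 2 ^ 2 ^ (k * k))
    calc (2 : ℝ) ^ 2 ^ (k * k) * ((2 : ℝ) ^ (k * k)) ^ Q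
        = 2 ^ 2 ^ (k * k) * ((2 ^ (k * k) : ℕ) : ℝ) ^ Q := by push_cast; rfl
      _ ≤ 2 ^ (k + 2 ^ (k * k) + 2 + d) * T := this
      _ = 2 ^ 2 ^ (k * k) * (2 ^ (d + 2) * T * 2 ^ k) := by ring
  obtain ⟨k, hk⟩ :=
    ((tendsto_rpow_two_pow_mul_self_div_two_pow hQpos).eventually_gt_atTop (2 ^ (d + 2) * T)).exists
  exact (hblock k).not_gt hk
end

section
/- Let T be a real number with T > 1. Then the series Z(T) = ∑_{p ∈ dom U} 2^{−|p|/T} diverges to ∞ (equivalently, the family of its nonnegative terms is not summable). -/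
/-! A string `s` of length `k²` can be handed to a prefix-free machine as `1ᵏ 0 s`, so by
optimality `U` prints each of the `2^(k²)` strings of length `k²` from some program of length
at most `k² + k + c`. Distinct outputs need distinct programs, hence
`Z(T) ≥ 2^(k²) · 2^(-(k² + k + c)/T)`, which is unbounded in `k` as soon as `T > 1`. -/

open Filter

def unaryPrefixed (k : ℕ) (s : List Bool) : List Bool :=
  List.replicate k true ++ false :: s

@[simp]
lemma length_unaryPrefixed (k : ℕ) (s : List Bool) :
    (unaryPrefixed k s).length = k + 1 + s.length := by
  simp only [unaryPrefixed, List.length_append, List.length_replicate, List.length_cons]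
  omega

lemma drop_unaryPrefixed (k : ℕ) (s : List Bool) : (unaryPrefixed k s).drop (k + 1) = s := by
  simp [unaryPrefixed, List.drop_append]

lemma primrec₂_unaryPrefixed : Primrec₂ unaryPrefixed := by
  have hreplicate : Primrec₂ (fun (k : ℕ) (_ : List Bool) => List.replicate k true) :=
    (Primrec.list_map (Primrec.list_range.comp Primrec.fst) (Primrec.const true).to₂).of_eq
      fun _ => by simp [List.map_const']
  exact Primrec.list_append.comp hreplicate
    (Primrec.list_cons.comp (Primrec.const false) Primrec.snd)

lemma unaryPrefixed_prefix_unaryPrefixed {k k' : ℕ} {s s' : List Bool}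
    (h : unaryPrefixed k s <+: unaryPrefixed k' s') : k = k' ∧ s <+: s' := by
  induction k generalizing k' with
  | zero =>
    cases k' with
    | zero => simpa [unaryPrefixed] using h
    | succ k' => simp [unaryPrefixed, List.replicate_succ] at h
  | succ k ih =>
    cases k' with
    | zero => simp [unaryPrefixed, List.replicate_succ] at h
    | succ k' =>
      simp only [unaryPrefixed, List.replicate_succ, List.cons_append,
        List.cons_prefix_cons, true_and] at h
      simpa using ih h

/-- `k` is recovered from the length `k² + k + 1` of the input `1ᵏ 0 s`. -/
def squareDecode (p : List Bool) : Option (List Bool) :=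
  let k := Nat.sqrt p.length
  let s := p.drop (k + 1)
  if unaryPrefixed k s = p ∧ s.length = k * k then some s else none

lemma squareDecode_eq_some_iff {p s : List Bool} :
    squareDecode p = some s ↔ ∃ k, 1 ≤ k ∧ s.length = k * k ∧ p = unaryPrefixed k s := by
  constructor
  · intro h
    simp only [squareDecode] at h
    split_ifs at h with hp
    obtain ⟨hcode, hlen⟩ := hp
    cases h
    refine ⟨_, ?_, hlen, hcode.symm⟩
    rw [Nat.one_le_iff_ne_zero, Ne, Nat.sqrt_eq_zero, ← hcode, length_unaryPrefixed]
    omega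
  · rintro ⟨k, hk, hs, rfl⟩
    have hsqrt : Nat.sqrt (unaryPrefixed k s).length = k := by
      rw [length_unaryPrefixed, hs, show k + 1 + k * k = k * k + (k + 1) by ring]
      exact Nat.sqrt_add_eq k (by omega)
    simp only [squareDecode, hsqrt, drop_unaryPrefixed, hs, and_self, if_true]

lemma primrec_squareDecode : Primrec squareDecode := by
  have hk : Primrec (fun p : List Bool => Nat.sqrt p.length) :=
    Primrec.nat_sqrt.comp Primrec.list_length
  have hs : Primrec (fun p : List Bool => p.drop (Nat.sqrt p.length + 1)) :=
    Primrec.list_drop.comp (Primrec.succ.comp hk) Primrec.id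
  exact Primrec.ite
    ((Primrec.eq.comp (primrec₂_unaryPrefixed.comp hk hs) Primrec.id).and
      (Primrec.eq.comp (Primrec.list_length.comp hs) (Primrec.nat_mul.comp hk hk)))
    (Primrec.option_some.comp hs) (Primrec.const none)

lemma prefixFree_squareDecode : PrefixFree {p | (squareDecode p).isSome} := by
  intro p hp q hq hpq
  obtain ⟨s, hps⟩ := Option.isSome_iff_exists.mp hp
  obtain ⟨t, hqt⟩ := Option.isSome_iff_exists.mp hq
  obtain ⟨k, -, hs, rfl⟩ := squareDecode_eq_some_iff.mp hps
  obtain ⟨k', -, ht, rfl⟩ := squareDecode_eq_some_iff.mp hqt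
  obtain ⟨rfl, hst⟩ := unaryPrefixed_prefix_unaryPrefixed hpq
  rw [hst.eq_of_length (hs.trans ht.symm)]

def squareCodeComputer : Computer where
  f p := squareDecode p
  partrec := primrec_squareDecode.to_comp.ofOption
  prefixFree := by simpa [Part.ofOption_dom] using prefixFree_squareDecode

lemma squareCodeComputer_f_unaryPrefixed {k : ℕ} (hk : 1 ≤ k) {s : List Bool}
    (hs : s.length = k * k) : squareCodeComputer.f (unaryPrefixed k s) = Part.some s := by
  simp [squareCodeComputer, squareDecode_eq_some_iff.mpr ⟨k, hk, hs, rfl⟩]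

lemma IsOptimal.exists_program_of_length_eq_mul_self {U : Computer} (hU : IsOptimal U) :
    ∃ c : ℕ, ∀ k ≥ 1, ∀ s : List Bool, s.length = k * k →
      ∃ p : List Bool, p.length ≤ k * k + k + c ∧ s ∈ U.f p := by
  obtain ⟨d, hd⟩ := hU squareCodeComputer
  refine ⟨1 + d, fun k hk s hs => ?_⟩
  have hcode := squareCodeComputer_f_unaryPrefixed hk hs
  obtain ⟨p, hlen, hout⟩ := hd (unaryPrefixed k s) (hcode ▸ Part.some_dom s)
  refine ⟨p, ?_, hout s (hcode ▸ Part.mem_some s)⟩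
  rw [length_unaryPrefixed, hs] at hlen
  omega

lemma rpow_le_zterm {U : Computer} {T : ℝ} (hT : 0 ≤ T) {L : ℕ} {p : U.domain}
    (hp : (p : List Bool).length ≤ L) : (2 : ℝ) ^ (-(L : ℝ) / T) ≤ zterm U T p :=
  Real.rpow_le_rpow_of_exponent_le one_le_two <|
    div_le_div_of_nonneg_right (neg_le_neg (by exact_mod_cast hp)) hT

lemma card_mul_rpow_le_tsum_zterm {U : Computer} {T : ℝ} (hT : 0 ≤ T)
    (hsum : Summable (zterm U T)) {ι : Type*} [Fintype ι] {g : ι → List Bool}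
    (hg : Function.Injective g) {L : ℕ} (hprog : ∀ i, ∃ p : List Bool, p.length ≤ L ∧ g i ∈ U.f p) :
    Fintype.card ι * (2 : ℝ) ^ (-(L : ℝ) / T) ≤ ∑' p, zterm U T p := by
  choose prog hlen hout using hprog
  let P : ι → U.domain := fun i => ⟨prog i, Part.dom_iff_mem.mpr ⟨_, hout i⟩⟩
  have hP : Function.Injective P := fun i j hij => by
    have hprog : prog i = prog j := congrArg Subtype.val hij
    exact hg <| Part.mem_unique (hout i) (hprog ▸ hout j)
  calc Fintype.card ι * (2 : ℝ) ^ (-(L : ℝ) / T)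
      = ∑ i, (2 : ℝ) ^ (-(L : ℝ) / T) := by simp
    _ ≤ ∑ i, zterm U T (P i) := Finset.sum_le_sum fun i _ => rpow_le_zterm hT (hlen i)
    _ = ∑' i, zterm U T (P i) := (tsum_fintype _).symm
    _ ≤ ∑' p, zterm U T p :=
      tsum_comp_le_tsum_of_inj hsum (fun p => (Real.rpow_pos_of_pos two_pos _).le) hP

lemma tendsto_two_pow_mul_self_mul_two_rpow {T : ℝ} (hT : 1 < T) (c : ℕ) :
    Tendsto (fun k : ℕ => (2 : ℝ) ^ (k * k) * (2 : ℝ) ^ (-((k * k + k + c : ℕ) : ℝ) / T))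
      atTop atTop := by
  have hslope : 0 < 1 - T⁻¹ := sub_pos.mpr (inv_lt_one_of_one_lt₀ hT)
  have hexp : Tendsto (fun k : ℕ => (k : ℝ) * ((1 - T⁻¹) * k - T⁻¹) - c / T) atTop atTop :=
    tendsto_atTop_add_const_right _ _ <| tendsto_natCast_atTop_atTop.atTop_mul_atTop₀ <|
      tendsto_atTop_add_const_right _ _ <| tendsto_natCast_atTop_atTop.const_mul_atTop hslope
  refine ((tendsto_rpow_atTop_of_base_gt_one 2 one_lt_two).comp hexp).congr fun k => ?_
  rw [Function.comp_apply, ← Real.rpow_natCast, ← Real.rpow_add two_pos]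
  congr 1
  push_cast
  field_simp
  ring

/-- **Theorem (paper Thm 8(ii)).** For real `T > 1`, the partition function
`Z(T) = ∑_{p ∈ dom U} 2^{-|p|/T}` diverges to infinity. -/
theorem Z_not_summable (U : Computer) (hU : IsOptimal U)
    (T : ℝ) (hT : 1 < T) :
    ¬ Summable (zterm U T) := by
  intro hsum
  obtain ⟨c, hprog⟩ := hU.exists_program_of_length_eq_mul_self
  have hbound : ∀ k ≥ 1,
      (2 : ℝ) ^ (k * k) * (2 : ℝ) ^ (-((k * k + k + c : ℕ) : ℝ) / T) ≤ ∑' p, zterm U T p := by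
    intro k hk
    simpa using card_mul_rpow_le_tsum_zterm (by linarith) hsum
      (g := fun v : List.Vector Bool (k * k) => v.toList) List.Vector.toList_injective
      fun v => hprog k hk v.toList v.toList_length
  obtain ⟨k, hlarge, hk⟩ := ((tendsto_two_pow_mul_self_mul_two_rpow hT c).eventually_gt_atTop
    (∑' p, zterm U T p) |>.and (eventually_ge_atTop 1)).exists
  exact (hbound k hk).not_gt hlarge
end

section
/- Let T be a real number with T ≥ 1, and let q₁, q₂, q₃, … be any enumeration (a bijection from ℕ⁺) of the countably infinite set dom U. Writing Z_n(T) = ∑_{i=1}^n 2^{−|q_i|/T}, W_n(T) = ∑_{i=1}^n |q_i|·2^{−|q_i|/T}, and S_n(T) = (1/T)·(W_n(T)/Z_n(T)) + log₂ Z_n(T), the finite-stage entropies S_n(T) diverge to ∞ as n → ∞. -/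
open Filter

/-!
Summing over programs, `W(T) = ∑_{p ∈ dom U} |p| 2^{-|p|/T}` diverges for `T ≥ 1`. Indeed, an
optimal `U` simulates the prefix-free decoder `0^k 1 s ↦ s` (for `|s| = 2^k`), so every string of
length `2^k` has a `U`-program of length at most `2^k + k + 1 + d`, while by counting at least half
of these strings have no program shorter than `2^k - 1`. The programs of the strings of length
`2^k` therefore contribute at least `2^{2^k-1} (2^k - 1) 2^{-(2^k+k+1+d)} ≥ 2^{-(d+3)}` to `W(T)`
(as `2^{-|p|/T} ≥ 2^{-|p|}`), and these blocks are disjoint. Along the enumeration, `W_n → ∞`;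
if `Z_n` stays bounded the term `W_n / (T Z_n)` diverges, and otherwise `log₂ Z_n` does.
-/

open Finset Function

def blockCode (k : ℕ) (s : List Bool) : List Bool := List.replicate k false ++ true :: s

def blockDecode (p : List Bool) : Option (List Bool) :=
  if p.length = 2 ^ p.findIdx id + p.findIdx id + 1 then some (p.drop (p.findIdx id + 1))
  else none

theorem primrec_blockDecode : Primrec blockDecode := by
  have hk : Primrec fun p : List Bool => p.findIdx id := Primrec.list_findIdx .id Primrec₂.right
  have hpow : Primrec₂ ((· ^ ·) : ℕ → ℕ → ℕ) := Primrec₂.unpaired'.1 Nat.Primrec.pow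
  refine Primrec.ite (Primrec.eq.comp Primrec.list_length ?_)
    (Primrec.option_some.comp (Primrec.list_drop.comp (Primrec.succ.comp hk) .id))
    (Primrec.const none)
  exact Primrec.nat_add.comp (Primrec.nat_add.comp (hpow.comp (Primrec.const 2) hk) hk)
    (Primrec.const 1)

theorem findIdx_blockCode (k : ℕ) (s : List Bool) : (blockCode k s).findIdx id = k := by
  induction k with
  | zero => simp [blockCode, List.findIdx_cons]
  | succ k ih => simpa [blockCode, List.replicate_succ, List.findIdx_cons] using ih

theorem length_blockCode (k : ℕ) (s : List Bool) : (blockCode k s).length = k + 1 + s.length := by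
  simp [blockCode]; omega

theorem blockDecode_blockCode {k : ℕ} {s : List Bool} (hs : s.length = 2 ^ k) :
    blockDecode (blockCode k s) = some s := by
  rw [blockDecode, findIdx_blockCode, length_blockCode, hs, if_pos (by omega)]
  simp [blockCode, List.drop_append]

theorem isSome_blockDecode {p : List Bool} :
    (blockDecode p).isSome ↔ p.length = 2 ^ p.findIdx id + p.findIdx id + 1 := by
  unfold blockDecode; split_ifs <;> simp [*]

theorem prefixFree_blockDecode : PrefixFree {p | (blockDecode p : Part (List Bool)).Dom} := by
  intro p hp q hq hpq
  simp only [Set.mem_ofPred_eq, Part.ofOption_dom, isSome_blockDecode] at hp hq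
  obtain ⟨t, rfl⟩ := hpq
  apply List.IsPrefix.eq_of_length (List.prefix_append p t)
  have : (p ++ t).findIdx id = p.findIdx id := by
    rw [List.findIdx_append, if_pos (by have := Nat.lt_two_pow_self (n := p.findIdx id); omega)]
  rw [hp, hq, this]

def blockComputer : Computer :=
  ⟨fun p => blockDecode p, Computable.ofOption primrec_blockDecode.to_comp,
    prefixFree_blockDecode⟩

theorem mem_blockComputer {k : ℕ} {s : List Bool} (hs : s.length = 2 ^ k) :
    s ∈ blockComputer.f (blockCode k s) := by
  simp [blockComputer, blockDecode_blockCode hs]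

theorem IsOptimal.exists_program_length_le {U : Computer} (hU : IsOptimal U) :
    ∃ d : ℕ, ∀ k (s : List Bool), s.length = 2 ^ k →
      ∃ p, p.length ≤ 2 ^ k + k + 1 + d ∧ s ∈ U.f p := by
  obtain ⟨d, hd⟩ := hU blockComputer
  refine ⟨d, fun k s hs => ?_⟩
  obtain ⟨p, hlen, hp⟩ := hd (blockCode k s) (Part.dom_iff_mem.2 ⟨s, mem_blockComputer hs⟩)
  refine ⟨p, ?_, hp s (mem_blockComputer hs)⟩
  rw [length_blockCode, hs] at hlen
  omega

theorem Finset.card_lt_two_pow_of_forall_length_lt {s : Finset (List Bool)} {m : ℕ}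
    (h : ∀ l ∈ s, l.length < m) : #s < 2 ^ m :=
  calc #s ≤ #((range m).biUnion fun n => univ.image fun f : Fin n → Bool => List.ofFn f) :=
        card_le_card fun l hl => mem_biUnion.2
          ⟨l.length, mem_range.2 (h l hl), mem_image.2 ⟨l.get, mem_univ _, List.ofFn_get l⟩⟩
    _ ≤ ∑ n ∈ range m, 2 ^ n :=
        card_biUnion_le.trans (sum_le_sum fun n _ => card_image_le.trans (by simp))
    _ < 2 ^ m := by rw [Nat.geomSum_eq le_rfl]; simp

theorem Fintype.card_lt_card_filter_le_length_add_two_pow {α : Type*} [Fintype α]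
    {P : α → List Bool} (hP : Injective P) (m : ℕ) :
    Fintype.card α < #{a | m ≤ (P a).length} + 2 ^ m := by
  have hshort : #{a | ¬m ≤ (P a).length} < 2 ^ m := by
    rw [← card_image_of_injective _ hP]
    refine card_lt_two_pow_of_forall_length_lt fun l hl => ?_
    obtain ⟨a, ha, rfl⟩ := mem_image.1 hl
    simpa using ha
  have := card_filter_add_card_filter_not (s := univ) fun a => m ≤ (P a).length
  rw [card_univ] at this
  omega

theorem inv_two_pow_le_rpow_neg_div {n L : ℕ} (hL : n ≤ L) {T : ℝ} (hT : 1 ≤ T) :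
    ((2 : ℝ) ^ L)⁻¹ ≤ (2 : ℝ) ^ (-(n : ℝ) / T) := by
  rw [← Real.rpow_natCast, ← Real.rpow_neg zero_le_two]
  refine Real.rpow_le_rpow_of_exponent_le one_le_two ?_
  rw [neg_div, neg_le_neg_iff]
  exact (div_le_self n.cast_nonneg hT).trans (Nat.cast_le.2 hL)

theorem inv_two_pow_add_three_le_sum_length_mul_rpow {k d : ℕ} {T : ℝ} (hT : 1 ≤ T)
    {P : (Fin (2 ^ (k + 1)) → Bool) → List Bool} (hP : Injective P)
    (hlen : ∀ f, (P f).length ≤ 2 ^ (k + 1) + (k + 1) + 1 + d) :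
    ((2 : ℝ) ^ (d + 3))⁻¹ ≤
      ∑ f, ((P f).length : ℝ) * (2 : ℝ) ^ (-((P f).length : ℝ) / T) := by
  set m := 2 ^ (k + 1) - 1
  have hm : 2 ^ (k + 1) = m + 1 := by have := Nat.one_le_two_pow (n := k + 1); omega
  clear_value m
  have hcard : 2 ^ m ≤ #{f | m ≤ (P f).length} := by
    have := Fintype.card_lt_card_filter_le_length_add_two_pow hP m
    simp only [Fintype.card_fun, Fintype.card_bool, Fintype.card_fin, hm, pow_succ] at this
    omega
  set long : Finset (Fin (2 ^ (k + 1)) → Bool) := {f | m ≤ (P f).length}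
  have hterm : ∀ f ∈ long, (m : ℝ) * ((2 : ℝ) ^ (m + k + d + 3))⁻¹ ≤
      ((P f).length : ℝ) * (2 : ℝ) ^ (-((P f).length : ℝ) / T) := by
    intro f hf
    refine mul_le_mul (Nat.cast_le.2 (mem_filter.1 hf).2) (inv_two_pow_le_rpow_neg_div ?_ hT)
      (by positivity) (by positivity)
    have := hlen f; omega
  have hmk : (2 : ℝ) ^ k ≤ m := by
    have hm' : (m : ℝ) + 1 = 2 ^ k * 2 := by rw [← pow_succ]; exact_mod_cast hm.symm
    linarith [one_le_pow₀ (M₀ := ℝ) one_le_two (n := k)]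
  calc ((2 : ℝ) ^ (d + 3))⁻¹ = 2 ^ m * (2 ^ k * ((2 : ℝ) ^ (m + k + d + 3))⁻¹) := by
        rw [pow_add, pow_add, pow_add]; field_simp; ring
    _ ≤ #long * (m * ((2 : ℝ) ^ (m + k + d + 3))⁻¹) := by gcongr; exact_mod_cast hcard
    _ ≤ ∑ f ∈ long, ((P f).length : ℝ) * (2 : ℝ) ^ (-((P f).length : ℝ) / T) := by
        rw [← nsmul_eq_mul]; exact card_nsmul_le_sum _ _ _ hterm
    _ ≤ ∑ f, ((P f).length : ℝ) * (2 : ℝ) ^ (-((P f).length : ℝ) / T) :=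
        sum_le_sum_of_subset_of_nonneg (subset_univ _) fun _ _ _ => by positivity

theorem IsOptimal.not_summable_wlterm {U : Computer} (hU : IsOptimal U) {T : ℝ} (hT : 1 ≤ T) :
    ¬Summable (wlterm U T) := by
  obtain ⟨d, hd⟩ := hU.exists_program_length_le
  choose P hPlen hPmem using fun k (f : Fin (2 ^ k) → Bool) => hd k (List.ofFn f) List.length_ofFn
  have hPinj : ∀ {k k'} {f : Fin (2 ^ k) → Bool} {f' : Fin (2 ^ k') → Bool},
      P k f = P k' f' → List.ofFn f = List.ofFn f' := fun h =>
    Part.mem_unique (hPmem _ _) (h ▸ hPmem _ _)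
  let g : (Σ k : ℕ, Fin (2 ^ (k + 1)) → Bool) → U.domain := fun x =>
    ⟨P (x.1 + 1) x.2, Part.dom_iff_mem.2 ⟨_, hPmem _ _⟩⟩
  have hg : Injective g := by
    rintro ⟨k, f⟩ ⟨k', f'⟩ h
    have hf := hPinj (congrArg Subtype.val h)
    obtain rfl : k = k' := by
      have := congrArg List.length hf
      simp only [List.length_ofFn] at this
      exact Nat.succ_injective (Nat.pow_right_injective le_rfl this)
    rw [List.ofFn_injective (a₁ := f) hf]
  intro hsum
  have hblocks : Summable fun k => ∑' f, wlterm U T (g ⟨k, f⟩) :=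
    (hsum.comp_injective hg).sigma
  have hconst : Summable fun _ : ℕ => ((2 : ℝ) ^ (d + 3))⁻¹ := by
    refine hblocks.of_nonneg_of_le (fun _ => by positivity) fun k => ?_
    rw [tsum_fintype]
    exact inv_two_pow_add_three_le_sum_length_mul_rpow hT
      (fun f f' h => List.ofFn_injective (hPinj h)) (hPlen _)
  exact (by positivity : ((2 : ℝ) ^ (d + 3))⁻¹ ≠ 0) ((summable_const_iff _).1 hconst)

theorem tendsto_sum_range_atTop_of_not_summable {α : Type*} {S : Set α} {f : α → ℝ}
    (hf : ∀ a ∈ S, 0 ≤ f a) (hS : ¬Summable fun a : S => f a) {q : ℕ → α}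
    (hmem : ∀ n, q n ∈ S) (hinj : Injective q) (hsurj : ∀ a ∈ S, ∃ n, q n = a) :
    Tendsto (fun n => ∑ i ∈ range n, f (q i)) atTop atTop := by
  let e : ℕ ≃ S := Equiv.ofBijective (fun n => ⟨q n, hmem n⟩)
    ⟨fun m n h => hinj (congrArg Subtype.val h),
      fun a => (hsurj a a.2).imp fun _ hn => Subtype.ext hn⟩
  exact (not_summable_iff_tendsto_nat_atTop_of_nonneg fun n => hf _ (hmem n)).1
    fun h => hS (e.summable_iff.1 h)

theorem tendsto_mul_div_add_logb_atTop {Z W : ℕ → ℝ} {b c : ℝ} (hb : 1 < b) (hc : 0 < c)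
    (hZ : Monotone Z) {N : ℕ} (hN : 0 < Z N) (hW0 : ∀ n, 0 ≤ W n)
    (hW : Tendsto W atTop atTop) :
    Tendsto (fun n => c * (W n / Z n) + Real.logb b (Z n)) atTop atTop := by
  have hZpos : ∀ n ≥ N, 0 < Z n := fun n hn => hN.trans_le (hZ hn)
  by_cases hbdd : BddAbove (Set.range Z)
  · obtain ⟨B, hB⟩ := hbdd
    have hBpos : 0 < B := hN.trans_le (hB ⟨N, rfl⟩)
    refine tendsto_atTop_mono' atTop ?_
      (tendsto_atTop_add_const_right _ (Real.logb b (Z N)) (hW.const_mul_atTop (div_pos hc hBpos)))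
    filter_upwards [eventually_ge_atTop N] with n hn
    refine add_le_add ?_ (Real.logb_le_logb_of_le hb hN (hZ hn))
    rw [div_mul_comm, mul_comm]
    exact mul_le_mul_of_nonneg_left
      (div_le_div_of_nonneg_left (hW0 n) (hZpos n hn) (hB ⟨n, rfl⟩)) hc.le
  · refine tendsto_atTop_mono' atTop ?_
      ((Real.tendsto_logb_atTop hb).comp (tendsto_atTop_atTop_of_monotone' hZ hbdd))
    filter_upwards [eventually_ge_atTop N] with n hn
    have := div_nonneg (hW0 n) (hZpos n hn).le
    simp only [comp_apply, le_add_iff_nonneg_left]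
    positivity

/-- **Theorem (paper Thm 12(ii)).** For real `T ≥ 1` and any enumeration
`q₁, q₂, …` of `dom U`, the finite-stage entropies
`S_n(T) = (1/T)·(W_n(T)/Z_n(T)) + log₂ Z_n(T)` diverge to infinity. -/
theorem finite_stage_entropy_tendsto_atTop (U : Computer) (hU : IsOptimal U)
    (T : ℝ) (hT : 1 ≤ T)
    (q : ℕ → List Bool) (hmem : ∀ n, q n ∈ U.domain)
    (hinj : Function.Injective q) (hsurj : ∀ p ∈ U.domain, ∃ n, q n = p) :
    Tendsto (fun n : ℕ =>
      (1 / T) * ((∑ i ∈ Finset.range n,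
          ((q i).length : ℝ) * (2 : ℝ) ^ (-((q i).length : ℝ) / T)) /
        (∑ i ∈ Finset.range n, (2 : ℝ) ^ (-((q i).length : ℝ) / T))) +
      Real.logb 2 (∑ i ∈ Finset.range n, (2 : ℝ) ^ (-((q i).length : ℝ) / T)))
      atTop atTop := by
  have hW := tendsto_sum_range_atTop_of_not_summable (S := U.domain)
    (f := fun p => (p.length : ℝ) * (2 : ℝ) ^ (-(p.length : ℝ) / T))
    (fun _ _ => by positivity)
    (hU.not_summable_wlterm hT) hmem hinj hsurj
  have hZ : Monotone fun n => ∑ i ∈ range n, (2 : ℝ) ^ (-((q i).length : ℝ) / T) :=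
    monotone_nat_of_le_succ fun n => by
      rw [sum_range_succ, le_add_iff_nonneg_right]; positivity
  exact tendsto_mul_div_add_logb_atTop one_lt_two (by positivity) hZ (N := 1)
    (by simp only [sum_range_one]; positivity) (fun n => sum_nonneg fun _ _ => by positivity) hW
end

section
/- Let q₁, q₂, q₃, … be any enumeration (a bijection from ℕ⁺) of the countably infinite set dom U. Writing Z_n = ∑_{i=1}^n 2^{−|q_i|}, W_n = ∑_{i=1}^n |q_i|·2^{−|q_i|}, and Y_n = ∑_{i=1}^n |q_i|²·2^{−|q_i|}, the finite-stage specific heats at temperature 1, namely C_n(1) = ln 2 · ( Y_n/Z_n − (W_n/Z_n)² ), diverge to ∞ as n → ∞. -/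
open Filter

/-!
With weights `w_i = 2^{-|q_i|}`, `C_n(1) / ln 2` is the variance of the lengths `|q_i|`, `i < n`,
under the normalised weights `w_i / Z_n`. Kraft's inequality gives `Z_n ≤ 1`, so the mean
`μ_n = W_n / Z_n` is at least `W_n`, and the term `i = 0` alone bounds the variance below by
`w_0 (|q_0| - μ_n)^2`. It remains to see `W_n → ∞`, i.e. `∑_{p ∈ dom U} |p| 2^{-|p|} = ∞`.
An optimal `U` simulates the computer sending `1^k 0 s` to `s` whenever `|s| = 2^k`, so for
each `k` it has `2^{2^k}` programs of length at most `2^k + k + O(1)` with distinct outputs of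
length `2^k`. Kraft allows at most half of them to be shorter than `2^k`, so each `k`
contributes at least a fixed `ε > 0` to the sum.
-/

open Finset

namespace PrefixFree

variable {S T : Set (List Bool)}

theorem mono (hS : PrefixFree S) (hTS : T ⊆ S) : PrefixFree T :=
  fun p hp q hq hpq => hS p (hTS hp) q (hTS hq) hpq

theorem uniquelyDecodable (hS : PrefixFree S) (hnil : [] ∉ S) :
    InformationTheory.UniquelyDecodable S := by
  intro L₁ L₂ h₁ h₂ hflat
  induction L₁ generalizing L₂ with
  | nil => cases L₂ <;> simp_all
  | cons a L₁ ih =>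
    cases L₂ with
    | nil => simp_all
    | cons b L₂ =>
      simp only [List.flatten_cons] at hflat
      have ha : a ∈ S := h₁ a (by simp)
      have hb : b ∈ S := h₂ b (by simp)
      have hab : a = b := by
        rcases List.prefix_or_prefix_of_prefix (List.prefix_append a L₁.flatten)
            (hflat ▸ List.prefix_append b L₂.flatten) with h | h
        · exact hS a ha b hb h
        · exact (hS b hb a ha h).symm
      subst hab
      rw [ih L₂ (fun w hw => h₁ w (by simp [hw])) (fun w hw => h₂ w (by simp [hw]))
        (List.append_cancel_left hflat)]

theorem sum_le_one {S : Finset (List Bool)} (hS : PrefixFree S) :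
    ∑ p ∈ S, (1 / 2 : ℝ) ^ p.length ≤ 1 := by
  by_cases hnil : [] ∈ S
  · have : S = {[]} := Finset.eq_singleton_iff_unique_mem.2
      ⟨hnil, fun p hp => (hS [] hnil p hp List.nil_prefix).symm⟩
    simp [this]
  · simpa using InformationTheory.kraft_mcmillan_inequality (hS.uniquelyDecodable hnil)

theorem sum_range_comp_le_one (hS : PrefixFree S) {q : ℕ → List Bool} (hq : ∀ n, q n ∈ S)
    (hinj : Function.Injective q) (n : ℕ) :
    ∑ i ∈ range n, (1 / 2 : ℝ) ^ (q i).length ≤ 1 := by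
  rw [← sum_image (f := fun p : List Bool => (1 / 2 : ℝ) ^ p.length) fun i _ j _ h => hinj h]
  refine (hS.mono ?_).sum_le_one
  simpa [Set.subset_def] using fun i _ => hq i

variable {S : Finset (List Bool)}

theorem card_filter_length_lt_le (hS : PrefixFree S) (n : ℕ) :
    (#(S.filter (·.length < n)) : ℝ) ≤ 2 ^ n / 2 := by
  have hweight : ∀ p ∈ S.filter (·.length < n), 2 * (1 / 2 : ℝ) ^ n ≤ (1 / 2) ^ p.length := by
    intro p hp
    have hlt : p.length + 1 ≤ n := (mem_filter.1 hp).2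
    calc 2 * (1 / 2 : ℝ) ^ n ≤ 2 * (1 / 2) ^ (p.length + 1) :=
          mul_le_mul_of_nonneg_left (pow_le_pow_of_le_one (by norm_num) (by norm_num) hlt)
            zero_le_two
      _ = (1 / 2) ^ p.length := by ring
  have hsum : (#(S.filter (·.length < n)) : ℝ) * (2 * (1 / 2) ^ n) ≤ 1 := by
    rw [← nsmul_eq_mul, ← sum_const]
    exact (sum_le_sum hweight).trans
      ((hS.mono (coe_subset.2 (filter_subset _ _))).sum_le_one)
  have hweight_inv : (2 : ℝ) * (1 / 2) ^ n = (2 ^ n / 2)⁻¹ := by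
    rw [one_div, inv_pow]; field_simp
  rwa [hweight_inv, ← div_eq_mul_inv, div_le_one (by positivity)] at hsum

theorem mul_card_sub_le_sum_length_mul (hS : PrefixFree S) {M : ℕ}
    (hM : ∀ p ∈ S, p.length ≤ M) (n : ℕ) :
    n * (#S - 2 ^ n / 2) * (1 / 2 : ℝ) ^ M ≤ ∑ p ∈ S, (p.length : ℝ) * (1 / 2) ^ p.length := by
  have hcard : (#S : ℝ) - 2 ^ n / 2 ≤ #(S.filter (¬ ·.length < n)) := by
    have hshort := hS.card_filter_length_lt_le n
    have hsplit := card_filter_add_card_filter_not (s := S) (·.length < n)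
    rw [← Nat.cast_inj (R := ℝ), Nat.cast_add] at hsplit
    linarith
  calc n * (#S - 2 ^ n / 2) * (1 / 2 : ℝ) ^ M
      ≤ #(S.filter (¬ ·.length < n)) * (n * (1 / 2 : ℝ) ^ M) := by
        rw [mul_comm (n : ℝ), mul_assoc]
        exact mul_le_mul_of_nonneg_right hcard (by positivity)
    _ ≤ ∑ p ∈ S.filter (¬ ·.length < n), (p.length : ℝ) * (1 / 2) ^ p.length := by
        rw [← nsmul_eq_mul, ← sum_const]
        refine sum_le_sum fun p hp => ?_
        rw [mem_filter, not_lt] at hp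
        exact mul_le_mul (by exact_mod_cast hp.2)
          (pow_le_pow_of_le_one (by norm_num) (by norm_num) (hM p hp.1)) (by positivity)
          (by positivity)
    _ ≤ ∑ p ∈ S, (p.length : ℝ) * (1 / 2) ^ p.length :=
        sum_le_sum_of_subset_of_nonneg (filter_subset _ _) (fun _ _ _ => by positivity)

end PrefixFree

def selfDelimit (k : ℕ) (s : List Bool) : List Bool := List.replicate k true ++ false :: s

def decodeSelfDelimit (p : List Bool) : Option (List Bool) :=
  if p.length = p.idxOf false + 1 + 2 ^ p.idxOf false then some (p.drop (p.idxOf false + 1))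
  else none

theorem primrec_decodeSelfDelimit : Primrec decodeSelfDelimit := by
  have hidx : Primrec fun p : List Bool => p.idxOf false :=
    Primrec.list_idxOf.comp (Primrec.const false) Primrec.id
  have hpow : Primrec₂ ((· ^ ·) : ℕ → ℕ → ℕ) := Primrec₂.unpaired'.1 Nat.Primrec.pow
  refine Primrec.ite ?_ (Primrec.option_some.comp
    (Primrec.list_drop.comp (Primrec.succ.comp hidx) Primrec.id)) (Primrec.const none)
  exact Primrec.eq.comp Primrec.list_length
    (Primrec.nat_add.comp (Primrec.succ.comp hidx) (hpow.comp (Primrec.const 2) hidx))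

theorem decodeSelfDelimit_selfDelimit {k : ℕ} {s : List Bool} (hs : s.length = 2 ^ k) :
    decodeSelfDelimit (selfDelimit k s) = some s := by
  have hidx : (selfDelimit k s).idxOf false = k := by
    simp [selfDelimit, List.idxOf_append_of_notMem]
  rw [decodeSelfDelimit, hidx, if_pos (by simp [selfDelimit, hs]; omega)]
  rw [selfDelimit, ← List.singleton_append, ← List.append_assoc,
    List.drop_left' (by simp)]

theorem decodeSelfDelimit_isSome_iff {p : List Bool} :
    (decodeSelfDelimit p).isSome ↔ p.length = p.idxOf false + 1 + 2 ^ p.idxOf false := by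
  unfold decodeSelfDelimit
  split_ifs with h <;> simp [h]

theorem prefixFree_dom_decodeSelfDelimit :
    PrefixFree {p | (decodeSelfDelimit p : Part (List Bool)).Dom} := by
  intro p hp q hq hpq
  simp only [Set.mem_ofPred_eq, Part.ofOption_dom, decodeSelfDelimit_isSome_iff] at hp hq
  have hmem : false ∈ p := List.idxOf_lt_length_iff.1
    (hp ▸ Nat.lt_of_lt_of_le (Nat.lt_succ_self _) (Nat.le_add_right _ _))
  exact hpq.eq_of_length (by rw [hp, hq, hpq.idxOf_eq_of_mem hmem])

def selfDelimitComputer : Computer where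
  f p := decodeSelfDelimit p
  partrec := Computable.ofOption primrec_decodeSelfDelimit.to_comp
  prefixFree := prefixFree_dom_decodeSelfDelimit

theorem IsOptimal.exists_program_of_length_eq_two_pow {U : Computer} (hU : IsOptimal U) :
    ∃ d : ℕ, ∀ (k : ℕ) (s : List Bool), s.length = 2 ^ k →
      ∃ p : List Bool, p.length ≤ 2 ^ k + k + 1 + d ∧ s ∈ U.f p := by
  obtain ⟨d, hd⟩ := hU selfDelimitComputer
  refine ⟨d, fun k s hs => ?_⟩
  have hval : s ∈ selfDelimitComputer.f (selfDelimit k s) := by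
    simp [selfDelimitComputer, decodeSelfDelimit_selfDelimit hs]
  obtain ⟨p, hlen, hp⟩ := hd _ (Part.dom_iff_mem.2 ⟨s, hval⟩)
  refine ⟨p, ?_, hp s hval⟩
  simp only [selfDelimit, List.length_append, List.length_replicate, List.length_cons, hs] at hlen
  omega

theorem IsOptimal.exists_programs_of_output_length_two_pow {U : Computer} (hU : IsOptimal U) :
    ∃ ε : ℝ, 0 < ε ∧ ∀ k : ℕ, ∃ T : Finset (List Bool),
      (∀ p ∈ T, ∃ s ∈ U.f p, s.length = 2 ^ k) ∧
      ε ≤ ∑ p ∈ T, (p.length : ℝ) * (1 / 2) ^ p.length := by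
  obtain ⟨d, hd⟩ := hU.exists_program_of_length_eq_two_pow
  refine ⟨(1 / 2) ^ (d + 2), by positivity, fun k => ?_⟩
  choose prog hlen hprog using fun v : Fin (2 ^ k) → Bool => hd k (List.ofFn v) (by simp)
  have hinj : Function.Injective prog := fun v w h =>
    List.ofFn_injective (Part.mem_unique (hprog v) (h ▸ hprog w))
  have hout : ∀ p ∈ univ.image prog, ∃ s ∈ U.f p, s.length = 2 ^ k := by
    intro p hp
    obtain ⟨v, -, rfl⟩ := mem_image.1 hp
    exact ⟨_, hprog v, by simp⟩
  have hdom : (↑(univ.image prog) : Set (List Bool)) ⊆ U.domain := fun p hp =>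
    have ⟨s, hs, _⟩ := hout p hp
    Part.dom_iff_mem.2 ⟨s, hs⟩
  have hcard : #(univ.image prog) = 2 ^ 2 ^ k := by
    rw [card_image_of_injective _ hinj]
    simp
  refine ⟨univ.image prog, hout, ?_⟩
  have hlen' : ∀ p ∈ univ.image prog, p.length ≤ 2 ^ k + k + 1 + d := by
    intro p hp
    obtain ⟨v, -, rfl⟩ := mem_image.1 hp
    exact hlen v
  -- `2^k · 2^(2^k - 1) · 2^-(2^k + k + 1 + d) = 2^-(d + 2)`
  refine le_of_eq_of_le ?_
    ((U.prefixFree.mono hdom).mul_card_sub_le_sum_length_mul hlen' (2 ^ k))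
  rw [hcard]
  push_cast
  simp only [one_div, inv_pow, pow_add]
  field_simp
  ring

theorem IsOptimal.exists_finset_le_sum_length_mul {U : Computer} (hU : IsOptimal U) (b : ℝ) :
    ∃ S : Finset (List Bool), ↑S ⊆ U.domain ∧
      b ≤ ∑ p ∈ S, (p.length : ℝ) * (1 / 2) ^ p.length := by
  obtain ⟨ε, hε, hblocks⟩ := hU.exists_programs_of_output_length_two_pow
  choose T hTout hTsum using hblocks
  obtain ⟨K, hK⟩ := exists_nat_ge (b / ε)
  have hdisj : Set.PairwiseDisjoint ↑(range K) T := by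
    intro j _ k _ hjk
    refine disjoint_left.2 fun p hpj hpk => hjk ?_
    obtain ⟨s, hs, hsj⟩ := hTout j p hpj
    obtain ⟨t, ht, htk⟩ := hTout k p hpk
    rw [Part.mem_unique hs ht] at hsj
    exact Nat.pow_right_injective le_rfl (hsj.symm.trans htk)
  refine ⟨(range K).biUnion T, ?_, ?_⟩
  · intro p hp
    obtain ⟨k, -, hpk⟩ := mem_biUnion.1 (mem_coe.1 hp)
    obtain ⟨s, hs, -⟩ := hTout k p hpk
    exact Part.dom_iff_mem.2 ⟨s, hs⟩
  · rw [sum_biUnion hdisj]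
    calc b ≤ K * ε := (div_le_iff₀ hε).1 hK
      _ = ∑ _k ∈ range K, ε := by simp
      _ ≤ _ := sum_le_sum fun k _ => hTsum k

theorem tendsto_sum_range_comp_atTop {α : Type*} {s : Set α} {f : α → ℝ} (hf : ∀ a, 0 ≤ f a)
    {q : ℕ → α} (hsurj : ∀ a ∈ s, ∃ n, q n = a)
    (hunbdd : ∀ b, ∃ S : Finset α, ↑S ⊆ s ∧ b ≤ ∑ a ∈ S, f a) :
    Tendsto (fun n => ∑ i ∈ range n, f (q i)) atTop atTop := by
  classical
  refine tendsto_atTop_atTop_of_monotone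
    (fun m n hmn => sum_le_sum_of_subset_of_nonneg (range_subset_range.2 hmn)
      fun i _ _ => hf (q i)) fun b => ?_
  obtain ⟨S, hSs, hbS⟩ := hunbdd b
  choose! idx hidx using fun a (ha : a ∈ S) => hsurj a (hSs ha)
  refine ⟨S.sup idx + 1, ?_⟩
  have hsub : S ⊆ (range (S.sup idx + 1)).image q := fun a ha =>
    mem_image.2 ⟨idx a, mem_range.2 (Nat.lt_succ_of_le (le_sup ha)), hidx a ha⟩
  calc b ≤ ∑ a ∈ S, f a := hbS
    _ ≤ ∑ a ∈ (range (S.sup idx + 1)).image q, f a :=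
      sum_le_sum_of_subset_of_nonneg hsub fun a _ _ => hf a
    _ ≤ _ := sum_image_le_of_nonneg fun a _ => hf a

section WeightedVariance

variable {ι : Type*} (s : Finset ι) (w x : ι → ℝ)

theorem weighted_variance_eq (hZ : ∑ i ∈ s, w i ≠ 0) :
    (∑ i ∈ s, x i ^ 2 * w i) / (∑ i ∈ s, w i) - ((∑ i ∈ s, x i * w i) / ∑ i ∈ s, w i) ^ 2 =
      (∑ i ∈ s, w i * (x i - (∑ i ∈ s, x i * w i) / ∑ i ∈ s, w i) ^ 2) / ∑ i ∈ s, w i := by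
  set μ := (∑ i ∈ s, x i * w i) / ∑ i ∈ s, w i with hμ
  have hexpand : ∑ i ∈ s, w i * (x i - μ) ^ 2 =
      ∑ i ∈ s, x i ^ 2 * w i - 2 * μ * ∑ i ∈ s, x i * w i + μ ^ 2 * ∑ i ∈ s, w i := by
    simp only [mul_sum, ← sum_sub_distrib, ← sum_add_distrib]
    exact sum_congr rfl fun i _ => by ring
  rw [hexpand, hμ]
  field_simp
  ring

theorem mul_sq_sub_div_le_weighted_variance (hw : ∀ i ∈ s, 0 ≤ w i)
    (hZ : 0 < ∑ i ∈ s, w i) {j : ι} (hj : j ∈ s) :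
    w j * (x j - (∑ i ∈ s, x i * w i) / ∑ i ∈ s, w i) ^ 2 / ∑ i ∈ s, w i ≤
      (∑ i ∈ s, x i ^ 2 * w i) / (∑ i ∈ s, w i) -
        ((∑ i ∈ s, x i * w i) / ∑ i ∈ s, w i) ^ 2 := by
  rw [weighted_variance_eq s w x hZ.ne']
  gcongr
  exact single_le_sum (f := fun i => w i * (x i - _) ^ 2)
    (fun i hi => mul_nonneg (hw i hi) (sq_nonneg _)) hj

end WeightedVariance

theorem two_rpow_neg_natCast (L : ℕ) : (2 : ℝ) ^ (-(L : ℝ)) = (1 / 2) ^ L := by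
  rw [Real.rpow_neg zero_le_two, Real.rpow_natCast, one_div, inv_pow]

/-- **Theorem (paper Thm 13(ii)).** For any enumeration `q₁, q₂, …` of
`dom U`, the finite-stage specific heats at temperature `1`,
`C_n(1) = ln 2 · (Y_n/Z_n − (W_n/Z_n)²)`, diverge to infinity. -/
theorem finite_stage_specificHeat_tendsto_atTop (U : Computer)
    (hU : IsOptimal U)
    (q : ℕ → List Bool) (hmem : ∀ n, q n ∈ U.domain)
    (hinj : Function.Injective q) (hsurj : ∀ p ∈ U.domain, ∃ n, q n = p) :
    Tendsto (fun n : ℕ => Real.log 2 *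
      ((∑ i ∈ Finset.range n,
          ((q i).length : ℝ) ^ 2 * (2 : ℝ) ^ (-((q i).length : ℝ))) /
        (∑ i ∈ Finset.range n, (2 : ℝ) ^ (-((q i).length : ℝ))) -
        ((∑ i ∈ Finset.range n,
            ((q i).length : ℝ) * (2 : ℝ) ^ (-((q i).length : ℝ))) /
          (∑ i ∈ Finset.range n, (2 : ℝ) ^ (-((q i).length : ℝ)))) ^ 2))
      atTop atTop := by
  simp only [two_rpow_neg_natCast]
  have hZle := PrefixFree.sum_range_comp_le_one U.prefixFree hmem hinj
  set ℓ : ℕ → ℝ := fun i => ((q i).length : ℝ)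
  set w : ℕ → ℝ := fun i => (1 / 2 : ℝ) ^ (q i).length
  have hw : ∀ i, 0 < w i := fun i => by positivity
  have hZpos : ∀ n ≥ 1, 0 < ∑ i ∈ range n, w i := fun n hn =>
    sum_pos (fun i _ => hw i) (nonempty_range_iff.2 (by omega))
  have hW : Tendsto (fun n => ∑ i ∈ range n, ℓ i * w i) atTop atTop :=
    tendsto_sum_range_comp_atTop (f := fun p : List Bool => (p.length : ℝ) * (1 / 2) ^ p.length)
      (fun _ => by positivity) hsurj hU.exists_finset_le_sum_length_mul
  have hμ : Tendsto (fun n => (∑ i ∈ range n, ℓ i * w i) / ∑ i ∈ range n, w i) atTop atTop := by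
    refine tendsto_atTop_mono' _ ?_ hW
    filter_upwards [eventually_ge_atTop 1] with n hn
    exact le_div_self (sum_nonneg fun i _ => mul_nonneg (Nat.cast_nonneg _) (hw i).le)
      (hZpos n hn) (hZle n)
  have hlow : Tendsto (fun n => Real.log 2 *
      (w 0 * (ℓ 0 - (∑ i ∈ range n, ℓ i * w i) / ∑ i ∈ range n, w i) ^ 2)) atTop atTop := by
    simp_rw [sub_sq_comm (ℓ 0)]
    exact (((tendsto_pow_atTop two_ne_zero).comp (tendsto_atTop_add_const_right _ _ hμ)
      ).const_mul_atTop (hw 0)).const_mul_atTop (Real.log_pos one_lt_two)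
  refine tendsto_atTop_mono' _ ?_ hlow
  filter_upwards [eventually_ge_atTop 1] with n hn
  refine mul_le_mul_of_nonneg_left ?_ (Real.log_nonneg one_le_two)
  exact (le_div_self (by positivity) (hZpos n hn) (hZle n)).trans
    (mul_sq_sub_div_le_weighted_variance (range n) w ℓ (fun i _ => (hw i).le) (hZpos n hn)
      (mem_range.2 hn))
end
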